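/- Let F be a field. (i) For every (x₀,x₁,x₂) ∈ F³, the point y = (x₀² − x₀x₁, x₀x₂, x₁², x₁x₂) satisfies y₁²y₂ − y₁y₂y₃ − y₀y₃² = 0, so the image of Q lies in Y. (ii) Q restricts to a bijection from the set of projective points (x₀:x₁:x₂) with x₁x₂ ≠ 0 onto the set of projective points y ∈ Y with y₂y₃ ≠ 0, with inverse given by y ↦ (y₁y₂ : y₂y₃ : y₃²). In particular Q is birational onto Y. -/

import Mathlib

/-- The parametrization `Q : ℙ² ⇢ ℙ³`, `(x₀:x₁:x₂) ↦ (x₀² − x₀x₁ : x₀x₂ : x₁² : x₁x₂)`,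
on coordinate representatives. -/
def Qmap {F : Type*} [Field F] (x : Fin 3 → F) : Fin 4 → F :=
  ![x 0 ^ 2 - x 0 * x 1, x 0 * x 2, x 1 ^ 2, x 1 * x 2]

/-- The defining equation of the surface `Y ⊂ ℙ³`: `y₁²y₂ − y₁y₂y₃ − y₀y₃² = 0`. -/
def OnY {F : Type*} [Field F] (y : Fin 4 → F) : Prop :=
  y 1 ^ 2 * y 2 - y 1 * y 2 * y 3 - y 0 * y 3 ^ 2 = 0

/-!
Both compositions are scalar multiples of the identity on representatives. The inverse
`(y₁y₂, y₂y₃, y₃²)` evaluated at `y = Q x` is `x₁²x₂ · x` identically, and `x₁²x₂ ≠ 0` when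
`x₁x₂ ≠ 0`. Conversely, `Q (y₁y₂, y₂y₃, y₃²)` is `y₂y₃² · y` in the last three coordinates
identically, and in the first exactly when `y₂(y₁²y₂ − y₁y₂y₃) = y₂y₀y₃²`, which is `y₂` times
the equation of `Y`.
-/

namespace Qmap

variable {F : Type*} [Field F]

def inv (y : Fin 4 → F) : Fin 3 → F :=
  ![y 1 * y 2, y 2 * y 3, y 3 ^ 2]

theorem onY (x : Fin 3 → F) : OnY (Qmap x) := by
  simp only [OnY, Qmap, Matrix.cons_val]
  ring

theorem two_mul_three_ne_zero {x : Fin 3 → F} (hx : x 1 * x 2 ≠ 0) : Qmap x 2 * Qmap x 3 ≠ 0 :=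
  mul_ne_zero (pow_ne_zero 2 (left_ne_zero_of_mul hx)) hx

theorem inv_one_mul_inv_two_ne_zero {y : Fin 4 → F} (hy : y 2 * y 3 ≠ 0) :
    inv y 1 * inv y 2 ≠ 0 :=
  mul_ne_zero hy (pow_ne_zero 2 (right_ne_zero_of_mul hy))

theorem inv_Qmap (x : Fin 3 → F) : inv (Qmap x) = (x 1 ^ 2 * x 2) • x := by
  ext i
  fin_cases i <;> simp [inv, Qmap] <;> ring

theorem Qmap_inv {y : Fin 4 → F} (hy : OnY y) : Qmap (inv y) = (y 2 * y 3 ^ 2) • y := by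
  rw [OnY] at hy
  ext i
  fin_cases i <;> simp [inv, Qmap]
  · linear_combination y 2 * hy
  all_goals ring

end Qmap

/-- (i) The image of `Q` lies in `Y`.  (ii) `Q` restricts to a
bijection from the projective points with `x₁x₂ ≠ 0` onto the projective points of `Y`
with `y₂y₃ ≠ 0`, with inverse `y ↦ (y₁y₂ : y₂y₃ : y₃²)`; in particular `Q` is birational
onto `Y`.  On representatives: for `x` with `x₁x₂ ≠ 0`, `Q x` satisfies `y₂y₃ ≠ 0` and
the inverse applied to `Q x` is a nonzero scalar multiple of `x`; and for `y` on `Y`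
with `y₂y₃ ≠ 0`, the tuple `x = (y₁y₂, y₂y₃, y₃²)` satisfies `x₁x₂ ≠ 0` and `Q x` is a
nonzero scalar multiple of `y`. -/
theorem Q_birational_onto_Y (F : Type*) [Field F] :
    (∀ x : Fin 3 → F, OnY (Qmap x)) ∧
    (∀ x : Fin 3 → F, x 1 * x 2 ≠ 0 →
      Qmap x 2 * Qmap x 3 ≠ 0 ∧
      ∃ c : F, c ≠ 0 ∧
        (![Qmap x 1 * Qmap x 2, Qmap x 2 * Qmap x 3, Qmap x 3 ^ 2] : Fin 3 → F) =
          c • x) ∧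
    ∀ y : Fin 4 → F, OnY y → y 2 * y 3 ≠ 0 →
      (![y 1 * y 2, y 2 * y 3, y 3 ^ 2] : Fin 3 → F) 1 *
          (![y 1 * y 2, y 2 * y 3, y 3 ^ 2] : Fin 3 → F) 2 ≠ 0 ∧
      ∃ c : F, c ≠ 0 ∧ Qmap (![y 1 * y 2, y 2 * y 3, y 3 ^ 2] : Fin 3 → F) = c • y := by
  refine ⟨Qmap.onY, fun x hx => ?_, fun y hy hyn => ?_⟩
  · have hx1 : x 1 ≠ 0 := left_ne_zero_of_mul hx
    have hx2 : x 2 ≠ 0 := right_ne_zero_of_mul hx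
    exact ⟨Qmap.two_mul_three_ne_zero hx, x 1 ^ 2 * x 2, by positivity, Qmap.inv_Qmap x⟩
  · have hy2 : y 2 ≠ 0 := left_ne_zero_of_mul hyn
    have hy3 : y 3 ≠ 0 := right_ne_zero_of_mul hyn
    exact ⟨Qmap.inv_one_mul_inv_two_ne_zero hyn, y 2 * y 3 ^ 2, by positivity, Qmap.Qmap_inv hy⟩
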